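/- arXiv:0706.1570 — 2 statements merged into one kernel-verified Lean document; each statement's English description precedes it below -/
import Mathlib

section
/- Let S be a strictly spacelike entire graph in 3-dimensional Minkowski space with D(S) ≠ ℝ³, and let p be a point of the frontier of D(S). Then: (i) there exists at least one null supporting plane of D(S) at p; and (ii) every supporting plane of D(S) at p is null or spacelike, i.e. if n ≠ 0 and the plane {x : B(x − p, n) = 0} is a supporting plane of D(S) at p, then Q(n) ≤ 0. (Proposition 11(c),(d).) -/
noncomputable section

/-- The Minkowski bilinear form `B(v,w) = v₁w₁ + v₂w₂ − v₃w₃` on `ℝ³`. -/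
def mB (v w : Fin 3 → ℝ) : ℝ := v 0 * w 0 + v 1 * w 1 - v 2 * w 2

/-- The Minkowski quadratic form `Q(v) = B(v,v)`. -/
def mQ (v : Fin 3 → ℝ) : ℝ := mB v v

/-- `v` is future-directed timelike: `Q v < 0` and `v₃ > 0`. -/
def FutureTimelike (v : Fin 3 → ℝ) : Prop := mQ v < 0 ∧ 0 < v 2

/-- `v` is future-directed causal: `Q v ≤ 0` and `v₃ > 0`. -/
def FutureCausal (v : Fin 3 → ℝ) : Prop := mQ v ≤ 0 ∧ 0 < v 2

/-- `v` is future-directed null: `Q v = 0` and `v₃ > 0`. -/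
def FutureNull (v : Fin 3 → ℝ) : Prop := mQ v = 0 ∧ 0 < v 2

/-- `S ⊆ ℝ³` is a strictly spacelike entire graph: the graph of a function
`h : ℝ² → ℝ` with `|h p − h q| < ‖p − q‖` (Euclidean distance) for `p ≠ q`. -/
def IsStrictlySpacelikeGraph (S : Set (Fin 3 → ℝ)) : Prop :=
  ∃ h : EuclideanSpace ℝ (Fin 2) → ℝ,
    (∀ p q : EuclideanSpace ℝ (Fin 2), p ≠ q → |h p - h q| < dist p q) ∧
    S = Set.range fun p : EuclideanSpace ℝ (Fin 2) => ![p 0, p 1, h p]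

/-- The future `I⁺(S)` of a set `S` in Minkowski space. -/
def IPlus (S : Set (Fin 3 → ℝ)) : Set (Fin 3 → ℝ) :=
  {x | ∃ s ∈ S, FutureTimelike (x - s)}

/-- The domain of dependence
`D(S) = S ∪ I⁺(S) ∪ {x : every future-directed causal ray from x meets S}`. -/
def DOD (S : Set (Fin 3 → ℝ)) : Set (Fin 3 → ℝ) :=
  S ∪ IPlus S ∪
    {x | ∀ v : Fin 3 → ℝ, FutureCausal v → ∃ t : ℝ, 0 ≤ t ∧ x + t • v ∈ S}

/-- The affine plane through `p` with (Minkowski) normal `n` supports `D` at `p`: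
`D` lies in one of the two closed half-spaces bounded by `{x : B (x − p) n = 0}`. -/
def SupportingAt (D : Set (Fin 3 → ℝ)) (p n : Fin 3 → ℝ) : Prop :=
  (∀ x ∈ D, mB (x - p) n ≤ 0) ∨ (∀ x ∈ D, 0 ≤ mB (x - p) n)

end

/-!
Write `S` as the graph of a 1-Lipschitz function `h` over the spatial plane. A point outside
`D(S)` lies below `S` and emits a causal ray that never meets `S`, hence stays below it; its
spatial velocity per unit time `w` has `‖w‖ ≤ 1`. Since these velocities range over a compact
ball, such rays pass to limits, so a frontier point `p = (p', p₃)` emits one as well, and the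
Lipschitz bound forces `‖w‖ = 1`: the ray is null. Along a null ray below the graph,
`h y ≥ p₃ + t - ‖y - (p' + t w)‖ → p₃ + ⟪y - p', w⟫`, so the whole null plane containing the ray
lies below `S`. Every point of `D(S)` has a ray with velocity `(w, 1)` that reaches `S`, hence
lies below this plane. Conversely, for a spacelike normal `n = (n', n₃)`, the functional `B(·, n)`
on `S` grows along `±n'` at rate at least `‖n'‖ (‖n'‖ - |n₃|) > 0`, so `S` meets both open sides
of every plane with normal `n`.
-/

open Set Filter Metric Topology RealInnerProductSpace

section LipschitzFunction

variable {E : Type*} [NormedAddCommGroup E] {h : E → ℝ} {q w : E} {z : ℝ}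

lemma LipschitzWith.one_le_norm_of_forall_add_le [NormedSpace ℝ E] (hh : LipschitzWith 1 h)
    (hray : ∀ t ≥ 0, z + t ≤ h (q + t • w)) : 1 ≤ ‖w‖ := by
  by_contra! hw
  have hslope : ∀ t ≥ 0, t * (1 - ‖w‖) ≤ h q - z := fun t ht => by
    have := hh.le_add_mul (q + t • w) q
    rw [NNReal.coe_one, one_mul, dist_eq_norm, add_sub_cancel_left, norm_smul,
      Real.norm_of_nonneg ht] at this
    linarith [hray t ht]
  have hz : z ≤ h q := by simpa using hray 0 le_rfl
  have := hslope ((h q - z + 1) / (1 - ‖w‖)) (by have := sub_pos.2 hw; positivity)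
  rw [div_mul_cancel₀ _ (sub_pos.2 hw).ne'] at this
  linarith

variable [InnerProductSpace ℝ E]

-- `√(s² + r) ≤ s + r / (2s)`, the tangent-line bound for the square root.
lemma norm_sub_smul_le_of_inner_lt (d : E) (hw : ‖w‖ = 1) {t : ℝ} (ht : ⟪d, w⟫ < t) :
    ‖d - t • w‖ ≤ (t - ⟪d, w⟫) + (‖d‖ ^ 2 - ⟪d, w⟫ ^ 2) / (2 * (t - ⟪d, w⟫)) := by
  set s := t - ⟪d, w⟫
  set u := (‖d‖ ^ 2 - ⟪d, w⟫ ^ 2) / (2 * s)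
  have hs : 0 < s := sub_pos.2 ht
  have hsq : ‖d - t • w‖ ^ 2 = s ^ 2 + 2 * s * u := by
    rw [norm_sub_sq_real, real_inner_smul_right, norm_smul, Real.norm_eq_abs, hw, mul_one,
      sq_abs]
    simp only [u]
    field_simp
    ring
  have hsu : 0 ≤ s + u := by nlinarith [sq_nonneg ‖d - t • w‖]
  refine (pow_le_pow_iff_left₀ (norm_nonneg _) hsu two_ne_zero).1 ?_
  rw [hsq]
  nlinarith [sq_nonneg u]

lemma LipschitzWith.add_inner_le_of_forall_add_le (hh : LipschitzWith 1 h) (hw : ‖w‖ = 1)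
    (hray : ∀ t ≥ 0, z + t ≤ h (q + t • w)) (y : E) : z + ⟪y - q, w⟫ ≤ h y := by
  set c := ⟪y - q, w⟫
  set r := ‖y - q‖ ^ 2 - c ^ 2
  have hlim : Tendsto (fun t => z + c - r / (2 * (t - c))) atTop (𝓝 (z + c)) := by
    simpa [sub_eq_add_neg] using tendsto_const_nhds.sub (tendsto_const_nhds.div_atTop
      ((tendsto_atTop_add_const_right _ (-c) tendsto_id).const_mul_atTop two_pos))
  refine le_of_tendsto hlim (eventually_gt_atTop (max c 0) |>.mono fun t ht => ?_)
  have hct : c < t := (le_max_left _ _).trans_lt ht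
  have hlip := hh.le_add_mul (q + t • w) y
  rw [NNReal.coe_one, one_mul, dist_eq_norm, show q + t • w - y = -(y - q - t • w) by abel,
    norm_neg] at hlip
  linarith [hray t ((le_max_right _ _).trans ht.le), norm_sub_smul_le_of_inner_lt (y - q) hw hct]

lemma LipschitzWith.not_bddAbove_range_inner_sub_mul (hh : LipschitzWith 1 h) {ν : E} {m : ℝ}
    (hm : |m| < ‖ν‖) : ¬BddAbove (range fun y => ⟪y, ν⟫ - m * h y) := by
  set g := fun y => ⟪y, ν⟫ - m * h y
  have hk : 0 < ‖ν‖ * (‖ν‖ - |m|) := mul_pos ((abs_nonneg m).trans_lt hm) (sub_pos.2 hm)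
  have hgrowth : ∀ t ≥ 0, g 0 + t * (‖ν‖ * (‖ν‖ - |m|)) ≤ g (t • ν) := fun t ht => by
    have hlip : |h (t • ν) - h 0| ≤ t * ‖ν‖ := by
      simpa [← Real.dist_eq, norm_smul, Real.norm_of_nonneg ht] using hh.dist_le_mul (t • ν) 0
    have hm' : m * (h (t • ν) - h 0) ≤ |m| * (t * ‖ν‖) :=
      (le_abs_self _).trans (abs_mul m _ ▸ mul_le_mul_of_nonneg_left hlip (abs_nonneg m))
    simp only [g, inner_zero_left, real_inner_smul_left, real_inner_self_eq_norm_sq]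
    nlinarith
  have htendsto : Tendsto (fun t : ℝ => g (t • ν)) atTop atTop :=
    tendsto_atTop_mono' _ ((eventually_ge_atTop 0).mono hgrowth)
      (tendsto_atTop_add_const_left _ _ (tendsto_id.atTop_mul_const hk))
  exact fun hbdd =>
    not_bddAbove_of_tendsto_atTop htendsto (hbdd.mono (range_comp_subset_range _ g))

end LipschitzFunction

lemma pos_of_continuousOn_Ici_of_ne_zero {f : ℝ → ℝ} (hf : ContinuousOn f (Ici 0))
    (h0 : 0 < f 0) (hne : ∀ t ≥ 0, f t ≠ 0) {t : ℝ} (ht : 0 ≤ t) : 0 < f t := by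
  by_contra! hft
  obtain ⟨c, hc, hfc⟩ := isPreconnected_Ici.intermediate_value (mem_Ici.2 ht) self_mem_Ici hf
    ⟨hft, h0.le⟩
  exact hne c hc hfc

local notation "ℝ²" => EuclideanSpace ℝ (Fin 2)

section Coordinates

noncomputable def spatial : (Fin 3 → ℝ) →L[ℝ] ℝ² :=
  LinearMap.toContinuousLinearMap
    ((WithLp.linearEquiv 2 ℝ (Fin 2 → ℝ)).symm.toLinearMap ∘ₗ LinearMap.funLeft ℝ ℝ Fin.castSucc)

@[simp] lemma spatial_apply (x : Fin 3 → ℝ) (i : Fin 2) : spatial x i = x i.castSucc := rfl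

def spacetime (q : ℝ²) (z : ℝ) : Fin 3 → ℝ := ![q 0, q 1, z]

@[simp] lemma spatial_spacetime (q : ℝ²) (z : ℝ) : spatial (spacetime q z) = q := by
  ext i; fin_cases i <;> rfl

@[simp] lemma spacetime_two (q : ℝ²) (z : ℝ) : spacetime q z 2 = z := rfl

lemma spacetime_spatial (x : Fin 3 → ℝ) : spacetime (spatial x) (x 2) = x := by
  ext i; fin_cases i <;> rfl

lemma mB_eq_inner_sub_mul (x n : Fin 3 → ℝ) : mB x n = ⟪spatial x, spatial n⟫ - x 2 * n 2 := by
  simp [mB, PiLp.inner_apply, Fin.sum_univ_two]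
  ring

lemma mQ_eq_norm_sq_sub_sq (n : Fin 3 → ℝ) : mQ n = ‖spatial n‖ ^ 2 - n 2 ^ 2 := by
  rw [mQ, mB_eq_inner_sub_mul, real_inner_self_eq_norm_sq, sq]
  ring

lemma futureTimelike_iff {v : Fin 3 → ℝ} : FutureTimelike v ↔ ‖spatial v‖ < v 2 := by
  rw [FutureTimelike, mQ_eq_norm_sq_sub_sq, sub_neg]
  refine ⟨fun ⟨hQ, hv⟩ => (pow_lt_pow_iff_left₀ (norm_nonneg _) hv.le two_ne_zero).1 hQ,
    fun hv => ?_⟩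
  have hv2 : 0 < v 2 := (norm_nonneg _).trans_lt hv
  exact ⟨(pow_lt_pow_iff_left₀ (norm_nonneg _) hv2.le two_ne_zero).2 hv, hv2⟩

lemma futureCausal_iff {v : Fin 3 → ℝ} : FutureCausal v ↔ ‖spatial v‖ ≤ v 2 ∧ 0 < v 2 := by
  rw [FutureCausal, mQ_eq_norm_sq_sub_sq, sub_nonpos]
  exact and_congr_left fun hv => pow_le_pow_iff_left₀ (norm_nonneg _) hv.le two_ne_zero

end Coordinates

lemma SupportingAt.mono {D D' : Set (Fin 3 → ℝ)} {p n : Fin 3 → ℝ} (hD : SupportingAt D p n)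
    (hD' : D' ⊆ D) : SupportingAt D' p n :=
  hD.imp (fun h x hx => h x (hD' hx)) (fun h x hx => h x (hD' hx))

section Graph

variable {h : ℝ² → ℝ}

def graphOf (h : ℝ² → ℝ) : Set (Fin 3 → ℝ) := range fun q => spacetime q (h q)

lemma lipschitzWith_one_of_strictly_spacelike
    (hh : ∀ p q : ℝ², p ≠ q → |h p - h q| < dist p q) : LipschitzWith 1 h :=
  LipschitzWith.of_le_add fun p q => by
    rcases eq_or_ne p q with rfl | hpq
    · simp
    · linarith [le_abs_self (h p - h q), hh p q hpq]

lemma mem_graphOf {x : Fin 3 → ℝ} : x ∈ graphOf h ↔ h (spatial x) = x 2 :=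
  ⟨by rintro ⟨q, rfl⟩; simp,
    fun hx => ⟨spatial x, show spacetime _ _ = x by rw [hx, spacetime_spatial]⟩⟩

lemma mem_IPlus_graphOf (hh : LipschitzWith 1 h) {x : Fin 3 → ℝ} :
    x ∈ IPlus (graphOf h) ↔ h (spatial x) < x 2 := by
  constructor
  · rintro ⟨_, ⟨q, rfl⟩, hq⟩
    rw [futureTimelike_iff, map_sub, spatial_spacetime] at hq
    have := hh.le_add_mul (spatial x) q
    rw [NNReal.coe_one, one_mul, dist_eq_norm] at this
    simp only [Pi.sub_apply, spacetime_two] at hq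
    linarith
  · intro hx
    refine ⟨_, ⟨spatial x, rfl⟩, futureTimelike_iff.2 ?_⟩
    simpa [map_sub] using hx

lemma exists_forall_add_le_of_notMem_DOD (hh : LipschitzWith 1 h) {x : Fin 3 → ℝ}
    (hx : x ∉ DOD (graphOf h)) :
    ∃ w ∈ closedBall (0 : ℝ²) 1, ∀ t ≥ 0, x 2 + t ≤ h (spatial x + t • w) := by
  simp only [DOD, mem_union, mem_ofPred_eq, not_or, not_forall, not_exists, not_and] at hx
  obtain ⟨⟨hxS, hxI⟩, v, hv, hmiss⟩ := hx
  rw [mem_graphOf] at hxS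
  rw [mem_IPlus_graphOf hh, not_lt] at hxI
  obtain ⟨hvs, hv2⟩ := futureCausal_iff.1 hv
  set w := (v 2)⁻¹ • spatial v
  have hw : w ∈ closedBall (0 : ℝ²) 1 := by
    rw [mem_closedBall_zero_iff, norm_smul, Real.norm_of_nonneg (inv_nonneg.2 hv2.le)]
    exact inv_mul_le_one_of_le₀ hvs hv2.le
  have hne : ∀ t ≥ 0, h (spatial x + t • w) - (x 2 + t) ≠ 0 := fun t ht heq => by
    have hspatial : spatial (x + (t / v 2) • v) = spatial x + t • w := by
      rw [map_add, map_smul, smul_smul, div_eq_mul_inv]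
    have htime : (x + (t / v 2) • v) 2 = x 2 + t := by
      simp [div_mul_cancel₀ _ hv2.ne']
    exact hmiss (t / v 2) (div_nonneg ht hv2.le)
      (mem_graphOf.2 (by rw [hspatial, htime]; linarith))
  refine ⟨w, hw, fun t ht => sub_nonneg.1 (pos_of_continuousOn_Ici_of_ne_zero ?_ ?_ hne ht).le⟩
  · have := hh.continuous
    fun_prop
  · simpa using lt_of_le_of_ne hxI (Ne.symm hxS)

lemma exists_le_add_of_mem_DOD (hh : LipschitzWith 1 h) {x : Fin 3 → ℝ}
    (hx : x ∈ DOD (graphOf h)) {w : ℝ²} (hw : w ∈ closedBall (0 : ℝ²) 1) :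
    ∃ t ≥ 0, h (spatial x + t • w) ≤ x 2 + t := by
  rcases hx with (hxS | hxI) | hray
  · exact ⟨0, le_rfl, by simpa using (mem_graphOf.1 hxS).le⟩
  · exact ⟨0, le_rfl, by simpa using ((mem_IPlus_graphOf hh).1 hxI).le⟩
  · obtain ⟨t, ht, hmem⟩ := hray (spacetime w 1)
      (futureCausal_iff.2 ⟨by simpa using hw, by simp⟩)
    rw [mem_graphOf] at hmem
    simp only [map_add, map_smul, spatial_spacetime, Pi.add_apply, Pi.smul_apply,
      spacetime_two, smul_eq_mul, mul_one] at hmem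
    exact ⟨t, ht, hmem.le⟩

lemma isClosed_setOf_exists_forall_add_le (hh : Continuous h) :
    IsClosed {x : Fin 3 → ℝ |
      ∃ w ∈ closedBall (0 : ℝ²) 1, ∀ t ≥ 0, x 2 + t ≤ h (spatial x + t • w)} := by
  have hK : IsClosed {a : (Fin 3 → ℝ) × closedBall (0 : ℝ²) 1 |
      ∀ t ≥ 0, a.1 2 + t ≤ h (spatial a.1 + t • (a.2 : ℝ²))} := by
    simp only [ofPred_forall]
    exact isClosed_iInter fun t => isClosed_iInter fun _ => isClosed_le (by fun_prop) (by fun_prop)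
  convert isClosedMap_fst_of_compactSpace _ hK using 1
  ext x
  simp

lemma exists_null_supportingAt_of_mem_closure_compl (hh : LipschitzWith 1 h) {p : Fin 3 → ℝ}
    (hp : p ∈ closure (DOD (graphOf h))ᶜ) :
    ∃ n : Fin 3 → ℝ, n ≠ 0 ∧ mQ n = 0 ∧ SupportingAt (DOD (graphOf h)) p n := by
  obtain ⟨w, hw, hray⟩ := (isClosed_setOf_exists_forall_add_le hh.continuous).closure_subset_iff.2
    (fun x hx => exists_forall_add_le_of_notMem_DOD hh hx) hp
  have hw1 : ‖w‖ = 1 :=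
    le_antisymm (mem_closedBall_zero_iff.1 hw) (hh.one_le_norm_of_forall_add_le hray)
  refine ⟨spacetime w 1, fun h0 => by simpa using congrFun h0 2, ?_, Or.inl fun x hx => ?_⟩
  · simp [mQ_eq_norm_sq_sub_sq, hw1]
  obtain ⟨t, ht, hle⟩ := exists_le_add_of_mem_DOD hh hx hw
  have hplane := hh.add_inner_le_of_forall_add_le hw1 hray (spatial x + t • w)
  rw [add_sub_right_comm, inner_add_left, real_inner_smul_left, real_inner_self_eq_norm_sq,
    hw1] at hplane
  rw [mB_eq_inner_sub_mul, map_sub]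
  simp only [spatial_spacetime, Pi.sub_apply, spacetime_two]
  linarith

lemma not_supportingAt_graphOf_of_pos (hh : LipschitzWith 1 h) (p : Fin 3 → ℝ)
    {n : Fin 3 → ℝ} (hn : 0 < mQ n) : ¬SupportingAt (graphOf h) p n := by
  rw [mQ_eq_norm_sq_sub_sq, sub_pos] at hn
  have hm : |n 2| < ‖spatial n‖ := abs_lt_of_sq_lt_sq hn (norm_nonneg _)
  have hB : ∀ q : ℝ², mB (spacetime q (h q) - p) n = ⟪q, spatial n⟫ - n 2 * h q - mB p n :=
    fun q => by simp only [mB_eq_inner_sub_mul, map_sub, inner_sub_left, spatial_spacetime,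
      Pi.sub_apply, spacetime_two]; ring
  rintro (hle | hge)
  · refine hh.not_bddAbove_range_inner_sub_mul hm ⟨mB p n, ?_⟩
    rintro _ ⟨q, rfl⟩
    linarith [hB q, hle _ ⟨q, rfl⟩]
  · refine hh.not_bddAbove_range_inner_sub_mul (ν := -spatial n) (m := -n 2)
      (by rwa [abs_neg, norm_neg]) ⟨-mB p n, ?_⟩
    rintro _ ⟨q, rfl⟩
    simp only [inner_neg_right]
    linarith [hB q, hge _ ⟨q, rfl⟩]

end Graph

theorem boundary_supporting_planes_general (S : Set (Fin 3 → ℝ))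
    (hS : IsStrictlySpacelikeGraph S)
    (p : Fin 3 → ℝ) (hp : p ∈ frontier (DOD S)) :
    (∃ n : Fin 3 → ℝ, n ≠ 0 ∧ mQ n = 0 ∧ SupportingAt (DOD S) p n) ∧
      (∀ n : Fin 3 → ℝ, n ≠ 0 → SupportingAt (DOD S) p n → mQ n ≤ 0) := by
  obtain ⟨h, hst, rfl⟩ := hS
  have hh : LipschitzWith 1 h := lipschitzWith_one_of_strictly_spacelike hst
  have hp' : p ∈ closure (DOD (graphOf h))ᶜ := (frontier_eq_closure_inter_closure.subset hp).2
  refine ⟨exists_null_supportingAt_of_mem_closure_compl hh hp', fun n _ hsup => ?_⟩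
  exact not_lt.1 fun hn => not_supportingAt_graphOf_of_pos hh p hn
    (hsup.mono (subset_union_left.trans subset_union_left))

/-- **Proposition 11(c),(d).** At any point `p` of the frontier of the domain of dependence of a
strictly spacelike entire graph (with `D(S) ≠ ℝ³`): (i) there is at least one null supporting
plane at `p`; (ii) every supporting plane at `p` is null or spacelike, i.e. its normal `n`
satisfies `Q(n) ≤ 0`. -/
theorem boundary_supporting_planes (S : Set (Fin 3 → ℝ))
    (hS : IsStrictlySpacelikeGraph S) (hne : DOD S ≠ Set.univ)
    (p : Fin 3 → ℝ) (hp : p ∈ frontier (DOD S)) :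
    (∃ n : Fin 3 → ℝ, n ≠ 0 ∧ mQ n = 0 ∧ SupportingAt (DOD S) p n) ∧
      (∀ n : Fin 3 → ℝ, n ≠ 0 → SupportingAt (DOD S) p n → mQ n ≤ 0) :=
  boundary_supporting_planes_general S hS p hp
end

section
/- Let S be a strictly spacelike entire graph in 3-dimensional Minkowski space with D(S) ≠ ℝ³, let X be the frontier of D(S), let p ∈ X, and let v be a future-directed null vector. Then the null ray {p + t v : t ≥ 0} is contained in X if and only if the null plane {x : B(x − p, v) = 0} is a supporting plane of D(S) at p. (Proposition 11(e): null rays contained in the boundary through p correspond one-to-one to null supporting planes at p.) -/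
/-!
Let `h` be the 1-Lipschitz function whose graph is `S`. Then `D(S)` is a future set: adding a
future causal vector raises the height above the graph, and a causal ray from a point below the
graph reaches the graph by the intermediate value theorem. For a future set `D` and a future null
`v`, a point `x ∈ D` with `B(x - p, v) > 0` would put `p + s v` in the chronological future of `x`
for large `s`, hence in the interior of `D`; conversely a supporting null plane containing the
ray keeps the ray out of the interior, while the ray stays in `closure D` because `D` is a future
set. The opposite half-space cannot contain `D`, since `D` contains points arbitrarily far in the
time direction.
-/

open Filter Topology

lemma mQ_smul (t : ℝ) (w : Fin 3 → ℝ) : mQ (t • w) = t ^ 2 * mQ w := by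
  simp only [mQ, mB, Pi.smul_apply, smul_eq_mul]; ring

lemma FutureCausal.smul {w : Fin 3 → ℝ} (hw : FutureCausal w) {t : ℝ} (ht : 0 < t) :
    FutureCausal (t • w) :=
  ⟨by rw [mQ_smul]; exact mul_nonpos_of_nonneg_of_nonpos (sq_nonneg t) hw.1,
    mul_pos ht hw.2⟩

lemma FutureTimelike.futureCausal {w : Fin 3 → ℝ} (hw : FutureTimelike w) : FutureCausal w :=
  ⟨hw.1.le, hw.2⟩

lemma FutureNull.futureCausal {v : Fin 3 → ℝ} (hv : FutureNull v) : FutureCausal v :=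
  ⟨hv.1.le, hv.2⟩

lemma FutureNull.ne_zero {v : Fin 3 → ℝ} (hv : FutureNull v) : v ≠ 0 :=
  fun h0 => hv.2.ne' (congrFun h0 2)

lemma futureTimelike_vertical {s : ℝ} (hs : 0 < s) : FutureTimelike ![0, 0, s] :=
  ⟨by simp [mQ, mB]; positivity, hs⟩

lemma isOpen_setOf_futureTimelike : IsOpen {w : Fin 3 → ℝ | FutureTimelike w} := by
  simp only [FutureTimelike, mQ, mB, Set.ofPred_and]
  exact (isOpen_lt (by fun_prop) continuous_const).inter (isOpen_lt continuous_const (by fun_prop))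

lemma eventually_lt_add_mul_atTop (c a : ℝ) {b : ℝ} (hb : 0 < b) :
    ∀ᶠ s in atTop, c < a + s * b :=
  (tendsto_atTop_add_const_left _ a (tendsto_id.atTop_mul_const hb)).eventually_gt_atTop c

lemma mB_neg_of_mem_interior {D : Set (Fin 3 → ℝ)} {p n y : Fin 3 → ℝ}
    (hD : ∀ x ∈ D, mB (x - p) n ≤ 0) (hn : n ≠ 0) (hy : y ∈ interior D) :
    mB (y - p) n < 0 := by
  -- move from `y` in the direction `u` with `B(u, n)` the Euclidean `‖n‖²`
  set u : Fin 3 → ℝ := ![n 0, n 1, -n 2]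
  have hnorm : 0 < n 0 ^ 2 + n 1 ^ 2 + n 2 ^ 2 := by
    by_contra! h
    obtain ⟨h0, h1, h2⟩ : n 0 = 0 ∧ n 1 = 0 ∧ n 2 = 0 := by
      refine ⟨?_, ?_, ?_⟩ <;> nlinarith [sq_nonneg (n 0), sq_nonneg (n 1), sq_nonneg (n 2)]
    exact hn (funext fun i => by fin_cases i <;> assumption)
  have hline : Tendsto (fun s : ℝ => y + s • u) (𝓝[>] 0) (𝓝 y) :=
    ((continuous_const.add (continuous_id.smul continuous_const)).tendsto' 0 y
      (by simp)).mono_left nhdsWithin_le_nhds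
  obtain ⟨s, hsD, hs⟩ := ((hline.eventually (mem_interior_iff_mem_nhds.1 hy)).and
    self_mem_nhdsWithin).exists
  have hB : mB (y + s • u - p) n = mB (y - p) n + s * (n 0 ^ 2 + n 1 ^ 2 + n 2 ^ 2) := by
    simp only [mB, u, Pi.add_apply, Pi.sub_apply, Pi.smul_apply, smul_eq_mul, Fin.isValue,
      Matrix.cons_val_zero, Matrix.cons_val_one, Matrix.cons_val, mul_neg]
    ring
  nlinarith [hD _ hsD, mul_pos (Set.mem_Ioi.1 hs) hnorm]

def IsFutureSet (D : Set (Fin 3 → ℝ)) : Prop :=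
  ∀ x ∈ D, ∀ w, FutureCausal w → x + w ∈ D

namespace IsFutureSet

variable {D : Set (Fin 3 → ℝ)}

lemma mem_interior (hD : IsFutureSet D) {x y : Fin 3 → ℝ} (hx : x ∈ D)
    (hxy : FutureTimelike (y - x)) : y ∈ interior D := by
  refine interior_maximal (fun z hz => ?_) (isOpen_setOf_futureTimelike.preimage
    (continuous_id.sub continuous_const)) hxy
  simpa using hD x hx (z - x) ⟨hz.1.le, hz.2⟩

protected lemma closure (hD : IsFutureSet D) : IsFutureSet (closure D) :=
  fun _ hx w hw => map_mem_closure (f := (· + w)) (continuous_id.add continuous_const) hx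
    fun y hy => hD y hy w hw

lemma mB_nonpos_of_ray_disjoint_interior (hD : IsFutureSet D) {p v : Fin 3 → ℝ}
    (hv : FutureNull v) (hray : ∀ t : ℝ, 0 ≤ t → p + t • v ∉ interior D) :
    ∀ x ∈ D, mB (x - p) v ≤ 0 := by
  intro x hx
  by_contra! hxv
  have hv0 : v 0 * v 0 + v 1 * v 1 - v 2 * v 2 = 0 := hv.1
  -- `B(x - p, v) > 0` makes `p + s v` timelike to the future of `x` once `s` is large
  obtain ⟨s, hQ, h2, hs⟩ :=
    ((eventually_lt_add_mul_atTop (mQ (p - x)) 0 (by linarith : 0 < 2 * mB (x - p) v)).and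
      ((eventually_lt_add_mul_atTop 0 (p 2 - x 2) hv.2).and (eventually_ge_atTop 0))).exists
  refine hray s hs (hD.mem_interior hx ⟨?_, ?_⟩)
  · have : mQ (p + s • v - x) = mQ (p - x) - s * (2 * mB (x - p) v) := by
      simp only [mQ, mB, Pi.add_apply, Pi.sub_apply, Pi.smul_apply, smul_eq_mul]
      linear_combination (s * s) * hv0
    linarith
  · simp only [Pi.add_apply, Pi.sub_apply, Pi.smul_apply, smul_eq_mul]
    linarith

lemma exists_mB_neg (hD : IsFutureSet D) (hne : D.Nonempty) {n : Fin 3 → ℝ} (hn : 0 < n 2)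
    (p : Fin 3 → ℝ) : ∃ x ∈ D, mB (x - p) n < 0 := by
  obtain ⟨x, hx⟩ := hne
  obtain ⟨s, hsn, hs⟩ := ((eventually_lt_add_mul_atTop (mB (x - p) n) 0 hn).and
    (eventually_gt_atTop 0)).exists
  refine ⟨x + ![0, 0, s], hD x hx _ (futureTimelike_vertical hs).futureCausal, ?_⟩
  have : mB (x + ![0, 0, s] - p) n = mB (x - p) n - s * n 2 := by
    simp only [mB, Pi.add_apply, Pi.sub_apply, Fin.isValue, Matrix.cons_val_zero,
      Matrix.cons_val_one, Matrix.cons_val, add_zero]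
    ring
  linarith

theorem ray_subset_frontier_iff_supportingAt (hD : IsFutureSet D) {p v : Fin 3 → ℝ}
    (hp : p ∈ closure D) (hv : FutureNull v) :
    (∀ t : ℝ, 0 ≤ t → p + t • v ∈ frontier D) ↔ SupportingAt D p v := by
  refine ⟨fun hray => Or.inl
    (hD.mB_nonpos_of_ray_disjoint_interior hv fun t ht => (hray t ht).2), ?_⟩
  rintro (hle | hge) t ht
  · refine ⟨?_, fun hint => (mB_neg_of_mem_interior hle hv.ne_zero hint).ne ?_⟩
    · rcases ht.eq_or_lt with rfl | ht
      · simpa using hp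
      · exact hD.closure p hp _ (hv.futureCausal.smul ht)
    · have hv0 : v 0 * v 0 + v 1 * v 1 - v 2 * v 2 = 0 := hv.1
      simp only [mB, Pi.add_apply, Pi.sub_apply, Pi.smul_apply, smul_eq_mul]
      linear_combination t * hv0
  · obtain ⟨x, hx, hneg⟩ := hD.exists_mB_neg (closure_nonempty_iff.1 ⟨p, hp⟩) hv.2 p
    exact absurd (hge x hx) hneg.not_ge

end IsFutureSet

section Graph

def horiz (x : Fin 3 → ℝ) : EuclideanSpace ℝ (Fin 2) := !₂[x 0, x 1]

lemma horiz_add (x y : Fin 3 → ℝ) : horiz (x + y) = horiz x + horiz y := by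
  ext i; fin_cases i <;> rfl

lemma continuous_horiz : Continuous horiz := by
  unfold horiz; fun_prop

lemma norm_horiz_le {w : Fin 3 → ℝ} (hw : FutureCausal w) : ‖horiz w‖ ≤ w 2 := by
  rw [EuclideanSpace.norm_eq, Real.sqrt_le_left hw.2.le]
  have := hw.1
  simp only [mQ, mB] at this
  simp only [horiz, Real.norm_eq_abs, sq_abs, Fin.sum_univ_two, Matrix.cons_val_zero,
    Matrix.cons_val_one]
  nlinarith

variable {h : EuclideanSpace ℝ (Fin 2) → ℝ}

lemma lipschitzWith_one_of_strictlySpacelike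
    (hst : ∀ p q : EuclideanSpace ℝ (Fin 2), p ≠ q → |h p - h q| < dist p q) :
    LipschitzWith 1 h :=
  LipschitzWith.of_dist_le_mul fun p q => by
    rcases eq_or_ne p q with rfl | hpq
    · simp
    · simpa [Real.dist_eq] using (hst p q hpq).le

def entireGraph (h : EuclideanSpace ℝ (Fin 2) → ℝ) : Set (Fin 3 → ℝ) :=
  Set.range fun q : EuclideanSpace ℝ (Fin 2) => ![q 0, q 1, h q]

def heightAbove (h : EuclideanSpace ℝ (Fin 2) → ℝ) (x : Fin 3 → ℝ) : ℝ :=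
  x 2 - h (horiz x)

lemma mem_entireGraph_iff {x : Fin 3 → ℝ} : x ∈ entireGraph h ↔ heightAbove h x = 0 := by
  rw [heightAbove, sub_eq_zero]
  constructor
  · rintro ⟨q, rfl⟩
    show h q = h (horiz ![q 0, q 1, h q])
    congr
    ext i; fin_cases i <;> rfl
  · intro hx
    refine ⟨horiz x, funext fun i => ?_⟩
    fin_cases i
    · rfl
    · rfl
    · exact hx.symm

lemma continuous_heightAbove (hh : Continuous h) : Continuous (heightAbove h) :=
  (continuous_apply 2).sub (hh.comp continuous_horiz)

lemma heightAbove_le_add (hh : LipschitzWith 1 h) (x : Fin 3 → ℝ) {w : Fin 3 → ℝ}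
    (hw : FutureCausal w) : heightAbove h x ≤ heightAbove h (x + w) := by
  have hlip := hh.dist_le_mul (horiz (x + w)) (horiz x)
  rw [horiz_add, Real.dist_eq, dist_eq_norm, add_sub_cancel_left, NNReal.coe_one, one_mul] at hlip
  have := (abs_le.1 hlip).2
  simp only [heightAbove, horiz_add, Pi.add_apply]
  linarith [norm_horiz_le hw]

lemma mem_dod_of_heightAbove_nonneg {x : Fin 3 → ℝ} (hx : 0 ≤ heightAbove h x) :
    x ∈ DOD (entireGraph h) := by
  rcases hx.eq_or_lt with h0 | hpos
  · exact Or.inl (Or.inl (mem_entireGraph_iff.2 h0.symm))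
  · refine Or.inl (Or.inr ⟨![x 0, x 1, h (horiz x)], ⟨horiz x, rfl⟩, ?_⟩)
    have : x - ![x 0, x 1, h (horiz x)] = ![0, 0, heightAbove h x] := by
      ext i; fin_cases i <;> simp [heightAbove]
    rw [this]
    exact futureTimelike_vertical hpos

lemma heightAbove_nonneg_of_mem_iPlus (hh : LipschitzWith 1 h) {x : Fin 3 → ℝ}
    (hx : x ∈ IPlus (entireGraph h)) : 0 ≤ heightAbove h x := by
  obtain ⟨s, hs, hxs⟩ := hx
  simpa [mem_entireGraph_iff.1 hs] using heightAbove_le_add hh s hxs.futureCausal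

theorem isFutureSet_dod_entireGraph (hh : LipschitzWith 1 h) :
    IsFutureSet (DOD (entireGraph h)) := by
  intro x hx w hw
  by_cases hxw : 0 ≤ heightAbove h (x + w)
  · exact mem_dod_of_heightAbove_nonneg hxw
  rw [not_le] at hxw
  rcases hx with (hS | hI) | hrays
  · exact absurd ((mem_entireGraph_iff.1 hS).ge.trans (heightAbove_le_add hh x hw)) hxw.not_ge
  · exact absurd ((heightAbove_nonneg_of_mem_iPlus hh hI).trans (heightAbove_le_add hh x hw))
      hxw.not_ge
  -- the ray from `x + w` starts below the graph and ends above it, where the shifted ray from `x`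
  -- meets the graph
  refine Or.inr fun z hz => ?_
  obtain ⟨t₁, ht₁, hmeet⟩ := hrays z hz
  have hend : 0 ≤ heightAbove h (x + w + t₁ • z) := by
    rw [add_right_comm, ← mem_entireGraph_iff.1 hmeet]
    exact heightAbove_le_add hh _ hw
  have hcont : Continuous fun t : ℝ => heightAbove h (x + w + t • z) :=
    (continuous_heightAbove hh.continuous).comp (by fun_prop)
  obtain ⟨t, ht, h0⟩ := intermediate_value_Icc ht₁ hcont.continuousOn
    ⟨by simpa using hxw.le, hend⟩
  exact ⟨t, ht.1, mem_entireGraph_iff.2 h0⟩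

end Graph

theorem null_rays_correspond_to_null_supporting_planes_general (S : Set (Fin 3 → ℝ))
    (hS : IsStrictlySpacelikeGraph S)
    (p : Fin 3 → ℝ) (hp : p ∈ frontier (DOD S))
    (v : Fin 3 → ℝ) (hv : FutureNull v) :
    (∀ t : ℝ, 0 ≤ t → p + t • v ∈ frontier (DOD S)) ↔ SupportingAt (DOD S) p v := by
  obtain ⟨h, hst, rfl⟩ := hS
  exact (isFutureSet_dod_entireGraph (lipschitzWith_one_of_strictlySpacelike hst)
    ).ray_subset_frontier_iff_supportingAt (frontier_subset_closure hp) hv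

/-- **Proposition 11(e).** For `p` on the frontier `X` of the domain of dependence of a strictly
spacelike entire graph (with `D(S) ≠ ℝ³`) and `v` a future-directed null vector, the null ray
`{p + t v : t ≥ 0}` is contained in `X` if and only if the null plane
`{x : B(x − p, v) = 0}` is a supporting plane of `D(S)` at `p`. -/
theorem null_rays_correspond_to_null_supporting_planes (S : Set (Fin 3 → ℝ))
    (hS : IsStrictlySpacelikeGraph S) (hne : DOD S ≠ Set.univ)
    (p : Fin 3 → ℝ) (hp : p ∈ frontier (DOD S))
    (v : Fin 3 → ℝ) (hv : FutureNull v) :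
    (∀ t : ℝ, 0 ≤ t → p + t • v ∈ frontier (DOD S)) ↔ SupportingAt (DOD S) p v :=
  null_rays_correspond_to_null_supporting_planes_general S hS p hp v hv
end
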